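/- arXiv:2407.03222 — 2 statements merged into one kernel-verified Lean document; each statement's English description precedes it below -/
import Mathlib

section
/- Let n ≥ 2 and let a₁,…,a_{n-1} be real numbers. If the quantities A_{αβ,γ} satisfy the symmetric, trace-free conditions of the second fundamental form derivatives of a minimal cone (trace over α of A_{αα,γ} = 0 for each γ, and full symmetry in all indices), then (1 + 2/(n-1)) · Σ_{α,β} A_{αα,β}² ≤ Σ_{α,β,γ} A_{αβ,γ}². -/
open Finset

private lemma erase_sum_eq {m : ℕ} (γ : Fin m) (f : Fin m → ℝ) :
    ∑ α ∈ Finset.univ.erase γ, f α = ∑ α, if α = γ then 0 else f α := by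
  rw [← Finset.add_sum_erase _ (fun α => if α = γ then 0 else f α) (Finset.mem_univ γ)]
  rw [if_pos rfl, zero_add]
  refine Finset.sum_congr rfl fun α hα => ?_
  simp [Finset.ne_of_mem_erase hα]

/-- Simons/Schoen–Simon–Yau inequality for the derivatives of the second
fundamental form of a minimal cone: if A_{αβ,γ} (indices 1 ≤ α,β,γ ≤ n-1) is fully
symmetric and trace-free in the first two indices, then
(1 + 2/(n-1)) Σ A_{αα,β}² ≤ Σ A_{αβ,γ}². -/
theorem stmt2 (n : ℕ) (hn : 2 ≤ n) (A : Fin (n - 1) → Fin (n - 1) → Fin (n - 1) → ℝ)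
    (hsymm1 : ∀ α β γ, A α β γ = A β α γ)
    (hsymm2 : ∀ α β γ, A α β γ = A α γ β)
    (htrace : ∀ γ, ∑ α, A α α γ = 0) :
    (1 + 2 / ((n : ℝ) - 1)) * ∑ β, ∑ α, (A α α β) ^ 2 ≤
      ∑ α, ∑ β, ∑ γ, (A α β γ) ^ 2 := by
  have hm1 : 1 ≤ n - 1 := by omega
  have hcast : (n : ℝ) - 1 = ((n - 1 : ℕ) : ℝ) := by
    rw [Nat.cast_sub (by omega : 1 ≤ n)]; norm_num
  set D := ∑ β, ∑ α, (A α α β : ℝ) ^ 2 with hD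
  set S := ∑ γ, ∑ α ∈ Finset.univ.erase γ, (A α α γ : ℝ) ^ 2 with hS
  have hSnn : 0 ≤ S := Finset.sum_nonneg fun γ _ =>
    Finset.sum_nonneg fun α _ => sq_nonneg _
  -- Step A : D ≤ (n-1) * S
  have hDS : D ≤ ((n - 1 : ℕ) : ℝ) * S := by
    rw [hD, hS, Finset.mul_sum]
    apply Finset.sum_le_sum
    intro γ _
    have hsplit : ∑ α, (A α α γ) ^ 2
        = (A γ γ γ) ^ 2 + ∑ α ∈ Finset.univ.erase γ, (A α α γ) ^ 2 :=
      (Finset.add_sum_erase _ (fun α => (A α α γ) ^ 2) (Finset.mem_univ γ)).symm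
    have htr : A γ γ γ = - ∑ α ∈ Finset.univ.erase γ, A α α γ := by
      have h := htrace γ
      rw [← Finset.add_sum_erase _ (fun α => A α α γ) (Finset.mem_univ γ)] at h
      linarith
    have hCS : (A γ γ γ) ^ 2 ≤ (((n - 1 : ℕ) : ℝ) - 1)
        * ∑ α ∈ Finset.univ.erase γ, (A α α γ) ^ 2 := by
      rw [htr, neg_sq]
      have hcs := sq_sum_le_card_mul_sum_sq (s := Finset.univ.erase γ)
        (f := fun α => A α α γ)
      have hcard : (((Finset.univ.erase γ).card : ℕ) : ℝ) = ((n - 1 : ℕ) : ℝ) - 1 := by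
        rw [Finset.card_erase_of_mem (Finset.mem_univ γ)]
        simp [Nat.cast_sub hm1]
      calc (∑ α ∈ Finset.univ.erase γ, A α α γ) ^ 2
          ≤ ((Finset.univ.erase γ).card : ℝ) * ∑ α ∈ Finset.univ.erase γ, (A α α γ) ^ 2 := by
            exact_mod_cast hcs
        _ = (((n - 1 : ℕ) : ℝ) - 1) * ∑ α ∈ Finset.univ.erase γ, (A α α γ) ^ 2 := by
            rw [hcard]
    have hnn : 0 ≤ ∑ α ∈ Finset.univ.erase γ, (A α α γ) ^ 2 :=
      Finset.sum_nonneg fun α _ => sq_nonneg _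
    rw [hsplit]; nlinarith
  -- Step B : per-γ inequality
  have hkey : ∀ γ : Fin (n - 1),
      (∑ α, (A α α γ) ^ 2) + ((∑ α ∈ Finset.univ.erase γ, (A α γ γ) ^ 2)
        + ∑ α ∈ Finset.univ.erase γ, (A α γ γ) ^ 2)
      ≤ ∑ α, ∑ β, (A α β γ) ^ 2 := by
    intro γ
    have h1 : ∑ α, ∑ β, (A α β γ) ^ 2
        = (∑ α, (A α α γ) ^ 2) + ∑ α, ∑ β ∈ Finset.univ.erase α, (A α β γ) ^ 2 := by
      rw [← Finset.sum_add_distrib]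
      exact Finset.sum_congr rfl fun α _ =>
        (Finset.add_sum_erase _ (fun β => (A α β γ) ^ 2) (Finset.mem_univ α)).symm
    rw [h1]
    gcongr (∑ α, (A α α γ) ^ 2) + ?_
    have h2 : ∑ α, ∑ β ∈ Finset.univ.erase α, (A α β γ) ^ 2
        = (∑ β ∈ Finset.univ.erase γ, (A γ β γ) ^ 2)
          + ∑ α ∈ Finset.univ.erase γ, ∑ β ∈ Finset.univ.erase α, (A α β γ) ^ 2 :=
      (Finset.add_sum_erase _ (fun α => ∑ β ∈ Finset.univ.erase α, (A α β γ) ^ 2)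
        (Finset.mem_univ γ)).symm
    rw [h2]
    gcongr ?_ + ?_
    · apply le_of_eq
      exact Finset.sum_congr rfl fun β _ => by rw [hsymm1 β γ γ]
    · apply Finset.sum_le_sum
      intro α hα
      have hγα : γ ∈ Finset.univ.erase α := by
        simp [Finset.mem_erase] at hα ⊢
        exact fun h => hα h.symm
      exact Finset.single_le_sum (f := fun β => (A α β γ) ^ 2)
        (fun β _ => sq_nonneg _) hγα
  have hswap : ∑ γ, ∑ α ∈ Finset.univ.erase γ, (A α γ γ : ℝ) ^ 2 = S := by
    rw [hS]
    simp only [erase_sum_eq]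
    rw [Finset.sum_comm]
    refine Finset.sum_congr rfl fun α _ => Finset.sum_congr rfl fun γ _ => ?_
    by_cases h : α = γ
    · simp [h]
    · have h' : ¬ γ = α := fun hh => h hh.symm
      rw [if_neg h, if_neg h', hsymm1 α γ γ, hsymm2 γ α γ]
  have hB : D + 2 * S ≤ ∑ α, ∑ β, ∑ γ, (A α β γ) ^ 2 := by
    have hcomm : ∑ α, ∑ β, ∑ γ, (A α β γ : ℝ) ^ 2
        = ∑ γ, ∑ α, ∑ β, (A α β γ) ^ 2 := by
      rw [show (∑ α, ∑ β, ∑ γ, (A α β γ : ℝ) ^ 2) = ∑ α, ∑ γ, ∑ β, (A α β γ) ^ 2 from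
        Finset.sum_congr rfl fun α _ => Finset.sum_comm, Finset.sum_comm]
    rw [hcomm]
    calc D + 2 * S
        = ∑ γ, ((∑ α, (A α α γ) ^ 2) + ((∑ α ∈ Finset.univ.erase γ, (A α γ γ) ^ 2)
            + ∑ α ∈ Finset.univ.erase γ, (A α γ γ) ^ 2)) := by
          rw [Finset.sum_add_distrib, Finset.sum_add_distrib, hswap, hD]; ring
      _ ≤ ∑ γ, ∑ α, ∑ β, (A α β γ) ^ 2 := Finset.sum_le_sum fun γ _ => hkey γ
  -- conclude
  rw [hcast]
  have hmpos : (0 : ℝ) < ((n - 1 : ℕ) : ℝ) := by exact_mod_cast hm1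
  have h2 : 2 / ((n - 1 : ℕ) : ℝ) * D ≤ 2 * S := by
    rw [div_mul_eq_mul_div, div_le_iff₀ hmpos]
    nlinarith
  calc (1 + 2 / ((n - 1 : ℕ) : ℝ)) * D = D + 2 / ((n - 1 : ℕ) : ℝ) * D := by ring
    _ ≤ D + 2 * S := by linarith
    _ ≤ _ := hB
end

section
/- For real numbers u ≥ k ≥ 0, α ∈ (0,1], δ > α, setting δ₂ = δ - α, one has u^{2/α}(α u² - δ(u-k)²) ≤ 2^{2/α} ((u-k)^{2/α} + k^{2/α}) k² (α + α²/δ₂). -/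
/-- Pointwise estimate in the weak Caccioppoli inequality: for u ≥ k ≥ 0,
α ∈ (0,1], δ > α, δ₂ = δ - α,
u^{2/α}(αu² - δ(u-k)²) ≤ 2^{2/α}((u-k)^{2/α} + k^{2/α}) k² (α + α²/δ₂). -/
theorem stmt3 (u k α δ : ℝ) (hk : 0 ≤ k) (huk : k ≤ u)
    (hα0 : 0 < α) (hα1 : α ≤ 1) (hδ : α < δ) :
    u ^ (2 / α) * (α * u ^ 2 - δ * (u - k) ^ 2) ≤
      (2 : ℝ) ^ (2 / α) * ((u - k) ^ (2 / α) + k ^ (2 / α)) * k ^ 2 *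
        (α + α ^ 2 / (δ - α)) := by
  have hδ2 : (0:ℝ) < δ - α := by linarith
  have hu0 : 0 ≤ u := le_trans hk huk
  have huk0 : 0 ≤ u - k := by linarith
  have he : 0 < 2 / α := by positivity
  -- key scalar bound
  have hdiv : α ^ 2 / (δ - α) * (δ - α) = α ^ 2 := div_mul_cancel₀ _ (ne_of_gt hδ2)
  have h1 : α * u ^ 2 - δ * (u - k) ^ 2 ≤ k ^ 2 * (α + α ^ 2 / (δ - α)) := by
    nlinarith [sq_nonneg ((δ - α) * (u - k) - α * k), sq_nonneg (u - k), hδ2.le,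
      mul_nonneg (div_nonneg (sq_nonneg α) hδ2.le) (sq_nonneg (u - k))]
  -- rpow bound
  have h2 : u ^ (2 / α) ≤ (2:ℝ) ^ (2 / α) * ((u - k) ^ (2 / α) + k ^ (2 / α)) := by
    have hmax : u ≤ 2 * max (u - k) k := by
      rcases le_total (u - k) k with h | h
      · have := max_eq_right h; rw [this]; linarith
      · have := max_eq_left h; rw [this]; linarith
    have hmax0 : 0 ≤ max (u - k) k := le_max_of_le_right hk
    calc u ^ (2 / α) ≤ (2 * max (u - k) k) ^ (2 / α) :=
          Real.rpow_le_rpow hu0 hmax he.le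
      _ = (2:ℝ) ^ (2 / α) * (max (u - k) k) ^ (2 / α) := by
          rw [Real.mul_rpow (by norm_num) hmax0]
      _ ≤ (2:ℝ) ^ (2 / α) * ((u - k) ^ (2 / α) + k ^ (2 / α)) := by
          apply mul_le_mul_of_nonneg_left _ (by positivity)
          rcases le_total (u - k) k with h | h
          · rw [max_eq_right h]
            have : 0 ≤ (u - k) ^ (2 / α) := Real.rpow_nonneg huk0 _
            linarith
          · rw [max_eq_left h]
            have : 0 ≤ k ^ (2 / α) := Real.rpow_nonneg hk _
            linarith
  have hR0 : 0 ≤ k ^ 2 * (α + α ^ 2 / (δ - α)) := by positivity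
  rcases le_or_gt (α * u ^ 2 - δ * (u - k) ^ 2) 0 with hb | hb
  · have : u ^ (2 / α) * (α * u ^ 2 - δ * (u - k) ^ 2) ≤ 0 :=
      mul_nonpos_of_nonneg_of_nonpos (Real.rpow_nonneg hu0 _) hb
    have hrhs : 0 ≤ (2 : ℝ) ^ (2 / α) * ((u - k) ^ (2 / α) + k ^ (2 / α)) * k ^ 2 *
        (α + α ^ 2 / (δ - α)) := by positivity
    linarith
  · calc u ^ (2 / α) * (α * u ^ 2 - δ * (u - k) ^ 2)
        ≤ ((2:ℝ) ^ (2 / α) * ((u - k) ^ (2 / α) + k ^ (2 / α))) *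
            (α * u ^ 2 - δ * (u - k) ^ 2) :=
          mul_le_mul_of_nonneg_right h2 hb.le
      _ ≤ ((2:ℝ) ^ (2 / α) * ((u - k) ^ (2 / α) + k ^ (2 / α))) *
            (k ^ 2 * (α + α ^ 2 / (δ - α))) :=
          mul_le_mul_of_nonneg_left h1 (by positivity)
      _ = (2 : ℝ) ^ (2 / α) * ((u - k) ^ (2 / α) + k ^ (2 / α)) * k ^ 2 *
            (α + α ^ 2 / (δ - α)) := by ring
end
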